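/- Let x_L ≤ x_R be integers and n_S := x_R − x_L + 1. Let θ be the right translation on ℓ²(ℤ) and, for x ∈ ℤ, let θ^x be the translation by x, (θ^x f)(y) := f(y − x). Let q_L and q_R be multiplication by the indicator functions of {x ∈ ℤ : x ≤ x_L − 1} and {x ∈ ℤ : x ≥ x_R + 1} respectively. Let h be a bounded operator on ℓ²(ℤ) with h* = h, h∘θ = θ∘h, and q_L∘h∘q_R = 0. Then ⟨δ_x, h δ₀⟩ = 0 for every x ∈ ℤ with |x| ≥ n_S + 1, and h = Σ_{x=−n_S}^{n_S} ⟨δ_x, h δ₀⟩ θ^x. -/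

import Mathlib

/-!
Translation invariance makes `h` a Toeplitz operator: its matrix elements are
`⟨δ_x, h δ_y⟩ = a (x - y)` with `a := h δ₀`. Since `q_L h q_R = 0`, the block from
`{y ≥ x_R + 1}` to `{x ≤ x_L - 1}` vanishes, and it contains every difference
`x - y ≤ -(n_S + 1)`; self-adjointness gives `a (-z) = conj (a z)`, which kills the
differences `≥ n_S + 1` as well. A Toeplitz operator whose symbol `a` is supported in a
finite set `s` is `∑_{z ∈ s} a z • θ^z`, as both sides agree on the Kronecker basis.
-/

noncomputable section

/-- The Hilbert space `ℓ²(ℤ)` of square-summable complex-valued functions on `ℤ`. -/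
abbrev ellTwo : Type := lp (fun _ : ℤ => ℂ) 2

/-- The Kronecker basis vector `δ_x ∈ ℓ²(ℤ)`. -/
def kron (x : ℤ) : ellTwo := lp.single 2 x (1 : ℂ)

open ComplexConjugate

lemma kron_apply (z x : ℤ) : (kron z : ℤ → ℂ) x = if x = z then 1 else 0 := by
  simp [kron, Pi.single_apply]

lemma inner_kron_left (x : ℤ) (f : ellTwo) : inner ℂ (kron x) f = f x := by
  simp [kron, lp.inner_single_left]

lemma ext_kron {F : Type*} [AddCommMonoid F] [Module ℂ F] [TopologicalSpace F] [T2Space F]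
    {f g : ellTwo →L[ℂ] F} (hfg : ∀ y, f (kron y) = g (kron y)) : f = g :=
  lp.ext_continuousLinearMap (by norm_num) fun y =>
    ContinuousLinearMap.ext_ring (by simpa [kron] using hfg y)

lemma IsSelfAdjoint.apply_kron_apply {h : ellTwo →L[ℂ] ellTwo} (hsa : IsSelfAdjoint h)
    (x y : ℤ) : h (kron y) x = conj (h (kron x) y) := by
  rw [← inner_kron_left, ← inner_kron_left, inner_conj_symm]
  exact (hsa.isSymmetric _ _).symm

lemma apply_kron_apply_eq_zero_of_decoupled {xL xR : ℤ} {qL qR h : ellTwo →L[ℂ] ellTwo}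
    (hqL : ∀ (f : ellTwo) (x : ℤ), (qL f) x = if x ≤ xL - 1 then f x else 0)
    (hqR : ∀ (f : ellTwo) (x : ℤ), (qR f) x = if xR + 1 ≤ x then f x else 0)
    (hdecoupled : (qL.comp h).comp qR = 0) {x y : ℤ} (hx : x ≤ xL - 1) (hy : xR + 1 ≤ y) :
    h (kron y) x = 0 := by
  have hqR_kron : qR (kron y) = kron y := by
    ext z
    rw [hqR, kron_apply]
    split_ifs <;> first | rfl | omega
  simpa [hqL, hx, hqR_kron] using congr($hdecoupled (kron y) x)

abbrev IsTranslation (Θ : ℤ → ellTwo →L[ℂ] ellTwo) : Prop :=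
  ∀ (z : ℤ) (f : ellTwo) (y : ℤ), Θ z f y = f (y - z)

namespace IsTranslation

variable {Θ : ℤ → ellTwo →L[ℂ] ellTwo}

lemma apply_apply (hΘ : IsTranslation Θ) (z w : ℤ) (f : ellTwo) :
    Θ z (Θ w f) = Θ (z + w) f := by
  ext y
  simp only [hΘ, sub_sub]

lemma zero_apply (hΘ : IsTranslation Θ) (f : ellTwo) : Θ 0 f = f := by
  ext y
  rw [hΘ, sub_zero]

lemma apply_kron (hΘ : IsTranslation Θ) (z y : ℤ) : Θ z (kron y) = kron (z + y) := by
  ext x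
  simp only [hΘ, kron_apply, sub_eq_iff_eq_add']

lemma map_apply_of_comp_one {h : ellTwo →L[ℂ] ellTwo} (hΘ : IsTranslation Θ)
    (hcomm : h.comp (Θ 1) = (Θ 1).comp h) (z : ℤ) (f : ellTwo) :
    h (Θ z f) = Θ z (h f) := by
  have hone (g : ellTwo) : h (Θ 1 g) = Θ 1 (h g) := congr($hcomm g)
  have hneg_one (g : ellTwo) : h (Θ (-1) g) = Θ (-1) (h g) := by
    have hg : g = Θ 1 (Θ (-1) g) := by rw [hΘ.apply_apply, add_neg_cancel, hΘ.zero_apply]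
    conv_rhs => rw [hg, hone, hΘ.apply_apply, neg_add_cancel, hΘ.zero_apply]
  induction z using Int.induction_on generalizing f with
  | zero => rw [hΘ.zero_apply, hΘ.zero_apply]
  | succ k ih => rw [add_comm, ← hΘ.apply_apply, hone, ih, hΘ.apply_apply]
  | pred k ih => rw [sub_eq_neg_add, ← hΘ.apply_apply, hneg_one, ih, hΘ.apply_apply]

variable {h : ellTwo →L[ℂ] ellTwo}

lemma apply_kron_apply_of_comp_one (hΘ : IsTranslation Θ)
    (hcomm : h.comp (Θ 1) = (Θ 1).comp h) (x y : ℤ) :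
    h (kron y) x = h (kron 0) (x - y) := by
  rw [← add_zero y, ← hΘ.apply_kron, hΘ.map_apply_of_comp_one hcomm, hΘ, add_zero]

lemma eq_sum_smul_of_comp_one (hΘ : IsTranslation Θ)
    (hcomm : h.comp (Θ 1) = (Θ 1).comp h) (s : Finset ℤ)
    (hs : ∀ z ∉ s, h (kron 0) z = 0) :
    h = ∑ z ∈ s, h (kron 0) z • Θ z := by
  refine ext_kron fun y => ?_
  ext x
  simp only [sum_apply, smul_apply, lp.coeFn_sum,
    lp.coeFn_smul, Finset.sum_apply, Pi.smul_apply, smul_eq_mul, hΘ.apply_kron, kron_apply]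
  rw [Finset.sum_eq_single (x - y) (fun z _ hz => by rw [if_neg (by omega), mul_zero])
      (fun hxy => by simp [hs _ hxy]), hΘ.apply_kron_apply_of_comp_one hcomm]
  simp

end IsTranslation

theorem stmt_8_general (xL xR : ℤ)
    (qL qR : ellTwo →L[ℂ] ellTwo)
    (Θ : ℤ → (ellTwo →L[ℂ] ellTwo))
    (hqL : ∀ (f : ellTwo) (x : ℤ), (qL f) x = if x ≤ xL - 1 then f x else 0)
    (hqR : ∀ (f : ellTwo) (x : ℤ), (qR f) x = if xR + 1 ≤ x then f x else 0)
    (hΘ : ∀ (z : ℤ) (f : ellTwo) (y : ℤ), (Θ z f) y = f (y - z))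
    (h : ellTwo →L[ℂ] ellTwo)
    (hsa : IsSelfAdjoint h)
    (hcomm : h.comp (Θ 1) = (Θ 1).comp h)
    (hdecoupled : (qL.comp h).comp qR = 0) :
    (∀ x : ℤ, (xR - xL + 1) + 1 ≤ |x| →
        (inner ℂ (kron x) (h (kron 0)) : ℂ) = 0) ∧
      h = ∑ x ∈ Finset.Icc (-(xR - xL + 1)) (xR - xL + 1),
            (inner ℂ (kron x) (h (kron 0)) : ℂ) • Θ x := by
  have htoeplitz := IsTranslation.apply_kron_apply_of_comp_one hΘ hcomm
  have hleft (z : ℤ) (hz : z ≤ -(xR - xL + 1 + 1)) : h (kron 0) z = 0 := by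
    have := apply_kron_apply_eq_zero_of_decoupled hqL hqR hdecoupled le_rfl
      (show xR + 1 ≤ xL - 1 - z by omega)
    rwa [htoeplitz, sub_sub_cancel] at this
  have hvanish (z : ℤ) (hz : xR - xL + 1 + 1 ≤ |z|) : h (kron 0) z = 0 := by
    rcases le_abs'.mp hz with hz | hz
    · exact hleft z hz
    · rw [hsa.apply_kron_apply, htoeplitz, hleft (0 - z) (by omega), map_zero]
  simp only [inner_kron_left]
  refine ⟨hvanish, IsTranslation.eq_sum_smul_of_comp_one hΘ hcomm _ fun z hz => hvanish z ?_⟩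
  rw [Finset.mem_Icc, not_and_or, not_le, not_le] at hz
  exact le_abs'.mpr (by omega)

/-- Let `x_L ≤ x_R` be integers and `n_S := x_R − x_L + 1`.  Let `Θ x` be the
translation by `x` on `ℓ²(ℤ)`, `(Θ x f)(y) = f(y − x)`, let `q_L`, `q_R` be multiplication by
the indicator functions of `{x ≤ x_L − 1}` and `{x ≥ x_R + 1}`.  Let `h` be a bounded operator
with `h* = h`, `h∘θ = θ∘h` (where `θ = Θ 1`), and `q_L ∘ h ∘ q_R = 0`.  Then
`⟨δ_x, h δ₀⟩ = 0` for every `x` with `|x| ≥ n_S + 1`, and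
`h = Σ_{x=−n_S}^{n_S} ⟨δ_x, h δ₀⟩ • Θ x`. -/
theorem stmt_8 (xL xR : ℤ) (hLR : xL ≤ xR)
    (qL qR : ellTwo →L[ℂ] ellTwo)
    (Θ : ℤ → (ellTwo →L[ℂ] ellTwo))
    (hqL : ∀ (f : ellTwo) (x : ℤ), (qL f) x = if x ≤ xL - 1 then f x else 0)
    (hqR : ∀ (f : ellTwo) (x : ℤ), (qR f) x = if xR + 1 ≤ x then f x else 0)
    (hΘ : ∀ (z : ℤ) (f : ellTwo) (y : ℤ), (Θ z f) y = f (y - z))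
    (h : ellTwo →L[ℂ] ellTwo)
    (hsa : IsSelfAdjoint h)
    (hcomm : h.comp (Θ 1) = (Θ 1).comp h)
    (hdecoupled : (qL.comp h).comp qR = 0) :
    (∀ x : ℤ, (xR - xL + 1) + 1 ≤ |x| →
        (inner ℂ (kron x) (h (kron 0)) : ℂ) = 0) ∧
      h = ∑ x ∈ Finset.Icc (-(xR - xL + 1)) (xR - xL + 1),
            (inner ℂ (kron x) (h (kron 0)) : ℂ) • Θ x :=
  stmt_8_general xL xR qL qR Θ hqL hqR hΘ h hsa hcomm hdecoupled
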